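/- The purchase-order schedulability property holds: for all integers A,B,C,D,E,F with A = 0, 1 ≤ B ≤ 2, 1 ≤ C ≤ 6, 3 ≤ D ≤ 5, E > 0, if new1(C,A,E) and new2(B,D,E,F) hold, then F − E ≤ 9. Equivalently, the goal clause 'false ← A=0 ∧ B≤2 ∧ C≤6 ∧ D≤5 ∧ E>0 ∧ F−E>9 ∧ B≥1 ∧ C≥1 ∧ D≥3 ∧ new1(C,A,E) ∧ new2(B,D,E,F)' is satisfied by the least model of the clause system. -/
import Mathlib


inductive New10 : ℤ → ℤ → ℤ → Prop
  | base (B : ℤ) : New10 0 B B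
  | step (A B C : ℤ) : A > 0 → New10 0 (A + B) C → New10 A B C

inductive New17 : ℤ → ℤ → ℤ → Prop
  | base (B : ℤ) : New17 0 B B
  | step (A B C : ℤ) : A > 0 → New17 0 (A + B) C → New17 A B C

inductive New11 : ℤ → ℤ → ℤ → Prop
  | base (B : ℤ) : New11 0 B B
  | step (A B C : ℤ) : A > 0 → New11 0 (A + B) C → New11 A B C

inductive New44 : ℤ → ℤ → ℤ → Prop
  | base (B : ℤ) : New44 0 B B
  | step (A B C : ℤ) : A > 0 → New44 0 (A + B) C → New44 A B C

inductive New21 : ℤ → ℤ → ℤ → Prop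
  | base (B C : ℤ) : (∃ D : ℤ, 1 ≤ D ∧ D ≤ 3 ∧ New10 D B C) → New21 0 B C
  | step (A B C : ℤ) : A > 0 → New21 0 (A + B) C → New21 A B C

inductive New37 : ℤ → ℤ → ℤ → Prop
  | base₁ (B C : ℤ) : (∃ D : ℤ, 1 ≤ D ∧ D ≤ 3 ∧ New17 D B C) → New37 0 B C
  | base₂ (B C : ℤ) : (∃ D : ℤ, 2 ≤ D ∧ D ≤ 4 ∧ New11 D B C) → New37 0 B C
  | step (A B C : ℤ) : A > 0 → New37 0 (A + B) C → New37 A B C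

inductive New7 : ℤ → ℤ → ℤ → ℤ → Prop
  | both_done (C : ℤ) : New7 0 0 C C
  | left_done (B C D : ℤ) : New10 B C D → New7 0 B C D
  | right_done (A C D : ℤ) : New11 A C D → New7 A 0 C D
  | step_left (A B C D : ℤ) : 0 < A → A ≤ B → New7 0 (B - A) (A + C) D → New7 A B C D
  | step_right (A B C D : ℤ) : 0 < B → B ≤ A → New7 (A - B) 0 (B + C) D → New7 A B C D

inductive New6 : ℤ → ℤ → ℤ → ℤ → Prop
  | both_done (C : ℤ) : New6 0 0 C C
  | left_done (B C D : ℤ) : New10 B C D → New6 0 B C D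
  | right_done (A C D : ℤ) : New17 A C D → New6 A 0 C D
  | step_left (A B C D : ℤ) : 0 < A → A ≤ B → New6 0 (B - A) (A + C) D → New6 A B C D
  | step_right (A B C D : ℤ) : 0 < B → B ≤ A → New6 (A - B) 0 (B + C) D → New6 A B C D

inductive New5 : ℤ → ℤ → ℤ → ℤ → Prop
  | base₁ (B C D : ℤ) : New21 B C D → New5 0 B C D
  | base₂ (C D : ℤ) : (∃ E : ℤ, 1 ≤ E ∧ E ≤ 3 ∧ New10 E C D) → New5 0 0 C D
  | base₃ (A C D : ℤ) : (∃ E : ℤ, 1 ≤ E ∧ E ≤ 3 ∧ New7 A E C D) → New5 A 0 C D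
  | step_left (A B C D : ℤ) : 0 < A → A ≤ B → New5 0 (B - A) (A + C) D → New5 A B C D
  | step_right (A B C D : ℤ) : 0 < B → B ≤ A → New5 (A - B) 0 (B + C) D → New5 A B C D

inductive New4 : ℤ → ℤ → ℤ → ℤ → Prop
  | base₁ (B C D : ℤ) : New21 B C D → New4 0 B C D
  | base₂ (C D : ℤ) : (∃ E : ℤ, 1 ≤ E ∧ E ≤ 3 ∧ New10 E C D) → New4 0 0 C D
  | base₃ (A C D : ℤ) : (∃ E : ℤ, 1 ≤ E ∧ E ≤ 3 ∧ New6 A E C D) → New4 A 0 C D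
  | step_left (A B C D : ℤ) : 0 < A → A ≤ B → New4 0 (B - A) (A + C) D → New4 A B C D
  | step_right (A B C D : ℤ) : 0 < B → B ≤ A → New4 (A - B) 0 (B + C) D → New4 A B C D

inductive New3 : ℤ → ℤ → ℤ → ℤ → Prop
  | base₁ (B C D : ℤ) : (∃ E : ℤ, 1 ≤ E ∧ E ≤ 3 ∧ New6 E B C D) → New3 0 B C D
  | base₂ (B C D : ℤ) : (∃ E : ℤ, 2 ≤ E ∧ E ≤ 4 ∧ New7 E B C D) → New3 0 B C D
  | base₃ (C D : ℤ) : (∃ E : ℤ, 1 ≤ E ∧ E ≤ 3 ∧ New17 E C D) → New3 0 0 C D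
  | base₄ (C D : ℤ) : (∃ E : ℤ, 2 ≤ E ∧ E ≤ 4 ∧ New11 E C D) → New3 0 0 C D
  | base₅ (A C D : ℤ) : New37 A C D → New3 A 0 C D
  | step_left (A B C D : ℤ) : 0 < A → A ≤ B → New3 0 (B - A) (A + C) D → New3 A B C D
  | step_right (A B C D : ℤ) : 0 < B → B ≤ A → New3 (A - B) 0 (B + C) D → New3 A B C D

inductive New2 : ℤ → ℤ → ℤ → ℤ → Prop
  | base₁ (B C D : ℤ) : (∃ E : ℤ, 1 ≤ E ∧ E ≤ 3 ∧ New3 B E C D) → New2 0 B C D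
  | base₂ (A C D : ℤ) : (∃ E : ℤ, 1 ≤ E ∧ E ≤ 3 ∧ New4 E A C D) → New2 A 0 C D
  | base₃ (A C D : ℤ) : (∃ E : ℤ, 2 ≤ E ∧ E ≤ 4 ∧ New5 E A C D) → New2 A 0 C D
  | base₄ (C D : ℤ) :
      (∃ E F : ℤ, 1 ≤ E ∧ E ≤ 3 ∧ 1 ≤ F ∧ F ≤ 3 ∧ New6 F E C D) → New2 0 0 C D
  | base₅ (C D : ℤ) :
      (∃ E F : ℤ, 1 ≤ E ∧ E ≤ 3 ∧ 2 ≤ F ∧ F ≤ 4 ∧ New7 F E C D) → New2 0 0 C D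
  | step_left (A B C D : ℤ) : 0 < A → A ≤ B → New2 0 (B - A) (A + C) D → New2 A B C D
  | step_right (A B C D : ℤ) : 0 < B → B ≤ A → New2 (A - B) 0 (B + C) D → New2 A B C D

inductive New1 : ℤ → ℤ → ℤ → Prop
  | loop (B C D : ℤ) : 1 ≤ D → D ≤ 6 → New1 D B C → New1 0 B C
  | exit (B C : ℤ) : (∃ D : ℤ, 1 ≤ D ∧ D ≤ 2 ∧ New44 D B C) → New1 0 B C
  | step (A B C : ℤ) : A > 0 → New1 0 (A + B) C → New1 A B C

lemma new10_eq {a b c : ℤ} (h : New10 a b c) : c = a + b ∧ 0 ≤ a := by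
  induction h with
  | base B => omega
  | step A B C hA _ ih => omega

lemma new17_eq {a b c : ℤ} (h : New17 a b c) : c = a + b ∧ 0 ≤ a := by
  induction h with
  | base B => omega
  | step A B C hA _ ih => omega

lemma new11_eq {a b c : ℤ} (h : New11 a b c) : c = a + b ∧ 0 ≤ a := by
  induction h with
  | base B => omega
  | step A B C hA _ ih => omega

lemma new7_le {a b c d : ℤ} (h : New7 a b c d) : d ≤ max a b + c := by
  induction h with
  | both_done C => omega
  | left_done B C D h => have := new10_eq h; omega
  | right_done A C D h => have := new11_eq h; omega
  | step_left A B C D h1 h2 _ ih => omega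
  | step_right A B C D h1 h2 _ ih => omega

lemma new6_le {a b c d : ℤ} (h : New6 a b c d) : d ≤ max a b + c := by
  induction h with
  | both_done C => omega
  | left_done B C D h => have := new10_eq h; omega
  | right_done A C D h => have := new17_eq h; omega
  | step_left A B C D h1 h2 _ ih => omega
  | step_right A B C D h1 h2 _ ih => omega

lemma new37_le {a b c : ℤ} (h : New37 a b c) : c ≤ a + b + 4 := by
  induction h with
  | base₁ B C h => obtain ⟨D, h1, h2, h3⟩ := h; have := new17_eq h3; omega
  | base₂ B C h => obtain ⟨D, h1, h2, h3⟩ := h; have := new11_eq h3; omega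
  | step A B C hA _ ih => omega

lemma new3_le {a b c d : ℤ} (h : New3 a b c d) : d ≤ max a b + c + 4 := by
  induction h with
  | base₁ B C D h => obtain ⟨E, h1, h2, h3⟩ := h; have := new6_le h3; omega
  | base₂ B C D h => obtain ⟨E, h1, h2, h3⟩ := h; have := new7_le h3; omega
  | base₃ C D h => obtain ⟨E, h1, h2, h3⟩ := h; have := new17_eq h3; omega
  | base₄ C D h => obtain ⟨E, h1, h2, h3⟩ := h; have := new11_eq h3; omega
  | base₅ A C D h => have := new37_le h; omega
  | step_left A B C D h1 h2 _ ih => omega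
  | step_right A B C D h1 h2 _ ih => omega

lemma new2_inv {b c d : ℤ} (h : New2 0 b c d) (hb : 0 < b) :
    ∃ e, 1 ≤ e ∧ e ≤ 3 ∧ New3 b e c d := by
  cases h with
  | base₁ _ _ _ h => exact h
  | base₂ _ _ _ h => omega
  | base₃ _ _ _ h => omega
  | base₄ _ _ h => omega
  | base₅ _ _ h => omega
  | step_left _ _ _ _ hb' ha' _ => omega
  | step_right _ _ _ _ hb' ha' _ => omega

/-- The purchase-order schedulability property: the goal clause is satisfied
    by the least model of the clause system. -/
theorem purchase_order_schedulability (A B C D E F : ℤ)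
    (hA : A = 0) (hB1 : 1 ≤ B) (hB2 : B ≤ 2) (hC1 : 1 ≤ C) (hC2 : C ≤ 6)
    (hD1 : 3 ≤ D) (hD2 : D ≤ 5) (hE : E > 0)
    (h1 : New1 C A E) (h2 : New2 B D E F) : F - E ≤ 9 := by
  cases h2 with
  | base₁ _ _ _ h => omega
  | base₂ _ _ _ h => omega
  | base₃ _ _ _ h => omega
  | base₄ _ _ h => omega
  | base₅ _ _ h => omega
  | step_right _ _ _ _ hb ha _ => omega
  | step_left _ _ _ _ hb ha h2' =>
    obtain ⟨E', hE1, hE2, h3⟩ := new2_inv h2' (by omega)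
    have := new3_le h3
    omega
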